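/- Let p ≥ 1 and n ≥ 1 be integers, q an integer with q ≤ -1, and m an integer with m ≥ -(2n-1)q. Let Γ = ⟨a, b, t ∣ t a^p t⁻¹ = b⁻¹ a^p, t b^{-q} a⁻¹ t⁻¹ = b^{-q}, t^m [b^q, a^p]^n = 1⟩, with commutator convention [x,y] = x⁻¹y⁻¹xy and integer powers interpreted as zpow. Then the identity element 1 of Γ lies in ⟨⟨t⟩⟩⁺; consequently, if t ≠ 1 in Γ, then t is a generalized torsion element of Γ. -/
import Mathlib


/-- `g` is a generalized torsion element of `G`: `g ≠ 1` and some non-empty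
finite product of conjugates of `g` equals `1`. -/
def IsGeneralizedTorsion {G : Type*} [Group G] (g : G) : Prop :=
  g ≠ 1 ∧ ∃ xs : List G, xs ≠ [] ∧ (xs.map (fun x => x * g * x⁻¹)).prod = 1

/-- `⟨⟨g⟩⟩⁺`: the set of all non-empty finite products of conjugates of `g`. -/
def conjProdSet {G : Type*} [Group G] (g : G) : Set G :=
  {a | ∃ xs : List G, xs ≠ [] ∧ (xs.map (fun x => x * g * x⁻¹)).prod = a}

/-- The commutator, with the convention `[x,y] = x⁻¹y⁻¹xy`. -/
def com {G : Type*} [Group G] (x y : G) : G := x⁻¹ * y⁻¹ * x * y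

/-- Relators of the presentation
`⟨a, b, t ∣ t a^p t⁻¹ = b⁻¹ a^p, t b^{-q} a⁻¹ t⁻¹ = b^{-q}, t^m [b^q,a^p]^n = 1⟩`
of `π₁(K(m/n))` for `m/n`-surgery on the genus one two-bridge knot
`K = C[2p, 2q]`; generator `0` is `a`, generator `1` is `b`, generator `2` is
`t` (the meridian), and `[b^q, a^p]` is the longitude. -/
def surgeryRels (p q m n : ℤ) : Set (FreeGroup (Fin 3)) :=
  { FreeGroup.of 2 * FreeGroup.of 0 ^ p * (FreeGroup.of 2)⁻¹ *
      ((FreeGroup.of 1)⁻¹ * FreeGroup.of 0 ^ p)⁻¹,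
    FreeGroup.of 2 * FreeGroup.of 1 ^ (-q) * (FreeGroup.of 0)⁻¹ *
      (FreeGroup.of 2)⁻¹ * (FreeGroup.of 1 ^ (-q))⁻¹,
    FreeGroup.of 2 ^ m *
      ((FreeGroup.of 1 ^ q)⁻¹ * (FreeGroup.of 0 ^ p)⁻¹ *
        FreeGroup.of 1 ^ q * FreeGroup.of 0 ^ p) ^ n }

section AuxLemmas

variable {G : Type*} [Group G]

lemma gt_conj_map_prod (T gg : G) (xs : List G) :
    ((xs.map (fun x => gg * x)).map (fun x => x * T * x⁻¹)).prod
      = gg * (xs.map (fun x => x * T * x⁻¹)).prod * gg⁻¹ := by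
  induction xs with
  | nil => simp
  | cons x xs ih =>
      simp only [List.map_cons, List.prod_cons, ih]
      group

lemma gt_mem_single (T gg : G) : gg * T * gg⁻¹ ∈ conjProdSet T :=
  ⟨[gg], by simp, by simp [conjProdSet]⟩

lemma gt_mem_mul {T a b : G} (ha : a ∈ conjProdSet T) (hb : b ∈ conjProdSet T) :
    a * b ∈ conjProdSet T := by
  obtain ⟨xs, hxs, hx⟩ := ha
  obtain ⟨ys, hys, hy⟩ := hb
  refine ⟨xs ++ ys, ?_, by simp [List.map_append, List.prod_append, hx, hy]⟩
  intro h
  rcases List.append_eq_nil_iff.mp h with ⟨h1, _⟩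
  exact hxs h1

lemma gt_mem_conj {T a : G} (gg : G) (ha : a ∈ conjProdSet T) :
    gg * a * gg⁻¹ ∈ conjProdSet T := by
  obtain ⟨xs, hxs, hx⟩ := ha
  refine ⟨xs.map (fun x => gg * x), ?_, by rw [gt_conj_map_prod, hx]⟩
  cases xs with
  | nil => exact absurd rfl hxs
  | cons a l => simp

lemma gt_chain_mem (T x d : G) (h : x * T = d * T * d⁻¹) :
    ∀ k : ℕ, x ^ (k + 1) * T ^ (k + 1) ∈ conjProdSet T := by
  intro k
  induction k with
  | zero => simpa [h] using gt_mem_single T d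
  | succ k ih =>
      have key : x ^ (k + 1 + 1) * T ^ (k + 1 + 1)
          = (x ^ (k + 1) * T ^ (k + 1)) * ((T ^ (k + 1))⁻¹ * (x * T) * T ^ (k + 1)) := by
        rw [pow_succ x (k + 1), pow_succ' T (k + 1)]
        generalize x ^ (k + 1) = X
        generalize T ^ (k + 1) = Y
        group
      rw [key, h]
      refine gt_mem_mul ih ?_
      have e : (T ^ (k + 1))⁻¹ * (d * T * d⁻¹) * T ^ (k + 1)
          = ((T ^ (k + 1))⁻¹ * d) * T * ((T ^ (k + 1))⁻¹ * d)⁻¹ := by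
        generalize T ^ (k + 1) = Y
        group
      rw [e]
      exact gt_mem_single T _

lemma gt_conj_pow_aux (y x : G) (k : ℕ) :
    (y⁻¹ * x * y) ^ k = y⁻¹ * x ^ k * y := by
  induction k with
  | zero => simp
  | succ k ih =>
      rw [pow_succ, pow_succ, ih]
      generalize x ^ k = X
      group

lemma gt_mem_pow_aux {T a : G} (ha : a ∈ conjProdSet T) :
    ∀ k : ℕ, a ^ k = 1 ∨ a ^ k ∈ conjProdSet T := by
  intro k
  induction k with
  | zero => left; simp
  | succ k ih =>
      rw [pow_succ]
      rcases ih with h | h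
      · right; rw [h, one_mul]; exact ha
      · right; exact gt_mem_mul h ha

/-- The main abstract lemma: in any group with elements `A B T` satisfying the
three relations of the surgery presentation, with `q ≤ -1`, `n ≥ 1`,
`m ≥ -(2n-1)q`, the identity is a non-empty product of conjugates of `T`. -/
theorem gt_main_lemma {G : Type*} [Group G] (A B T : G) (p q m n : ℤ)
    (hq : q ≤ -1) (hn : 1 ≤ n) (hm : -((2 * n - 1) * q) ≤ m)
    (R1 : T * A ^ p * T⁻¹ = B⁻¹ * A ^ p)
    (R2 : T * B ^ (-q) * A⁻¹ * T⁻¹ = B ^ (-q))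
    (R3 : T ^ m * ((B ^ q)⁻¹ * (A ^ p)⁻¹ * B ^ q * A ^ p) ^ n = 1) :
    (1 : G) ∈ conjProdSet T := by
  -- abbreviations
  set r : ℤ := -q with hrdef
  set v : G := A ^ p with hvdef
  set u : G := B ^ r with hudef
  have hBqinv : (B ^ q)⁻¹ = u := by rw [hudef, hrdef, zpow_neg]
  have hBq : B ^ q = u⁻¹ := by rw [← hBqinv, inv_inv]
  rw [hBqinv, hBq] at R3
  set lam : G := u * v⁻¹ * u⁻¹ * v with hlam
  -- R3 : T ^ m * lam ^ n = 1
  -- natural number versions of exponents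
  obtain ⟨r', hr'⟩ : ∃ k : ℕ, (k : ℤ) = r := ⟨r.toNat, Int.toNat_of_nonneg (by omega)⟩
  obtain ⟨s', hs'⟩ : ∃ k : ℕ, r' = k + 1 := ⟨r' - 1, by omega⟩
  have hupow : u = B ^ r' := by rw [hudef, ← hr', zpow_natCast]
  have hTr : T ^ r = T ^ r' := by rw [← hr', zpow_natCast]
  -- basic consequences of R1
  have hBTv : B * (T * v) = v * T := by
    have h := congrArg (fun x => B * x * T) R1
    simpa [mul_assoc] using h
  have hBT : B * T = v * T * v⁻¹ := by
    rw [eq_mul_inv_iff_mul_eq, mul_assoc]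
    exact hBTv
  have hxT' : v⁻¹ * (B⁻¹ * (v * T)) = v⁻¹ * (T * v) := by
    have h := congrArg (fun x => v⁻¹ * x * T) R1.symm
    simpa [mul_assoc] using h
  have hxTd : (v⁻¹ * B⁻¹ * v) * T = v⁻¹ * T * (v⁻¹)⁻¹ := by
    simp only [inv_inv, mul_assoc]
    simpa [mul_assoc] using hxT'
  -- basic consequences of R2
  have hu1 : T⁻¹ * (u * T) = u * A⁻¹ := by
    have h := congrArg (fun x => T⁻¹ * x * T) R2
    simpa [mul_assoc] using h.symm
  have hu2 : T⁻¹ * (u⁻¹ * T) = A * u⁻¹ := by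
    have h := congrArg (·⁻¹) hu1
    simpa [mul_inv_rev, mul_assoc] using h
  -- commutation of T and lam
  set g : G := T⁻¹ * B * T with hgdef
  have hgv' : T⁻¹ * (v * T) = g * v := by
    rw [hgdef]
    simp only [mul_assoc]
    rw [hBTv]
  have hv2 : T⁻¹ * (v⁻¹ * T) = v⁻¹ * g⁻¹ := by
    have h := congrArg (·⁻¹) hgv'
    simpa [mul_inv_rev, mul_assoc] using h
  have hgpow : (g⁻¹) ^ r' = A * u⁻¹ := by
    have hgi : g⁻¹ = T⁻¹ * B⁻¹ * T := by
      rw [hgdef]; simp [mul_inv_rev, mul_assoc]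
    rw [hgi, gt_conj_pow_aux, inv_pow, ← hupow, mul_assoc]
    exact hu2
  have hAucomm : g⁻¹ * (A * u⁻¹) * g = A * u⁻¹ := by
    rw [← hgpow]
    have h := ((Commute.refl g⁻¹).pow_right r').eq
    rw [h, mul_assoc, inv_mul_cancel, mul_one]
  have hCAv : Commute A v := by rw [hvdef]; exact Commute.self_zpow A p
  have hAvinv : A⁻¹ * v⁻¹ = v⁻¹ * A⁻¹ := (hCAv.inv_inv).eq
  have hTlam : T⁻¹ * lam * T = lam := by
    have expand : T⁻¹ * lam * T
        = (T⁻¹ * (u * T)) * (T⁻¹ * (v⁻¹ * T)) * ((T⁻¹ * (u⁻¹ * T)) * (T⁻¹ * (v * T))) := by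
      rw [hlam]; group
    rw [expand, hu1, hv2, hu2, hgv']
    have e1 : (u * A⁻¹) * (v⁻¹ * g⁻¹) * ((A * u⁻¹) * (g * v))
        = u * A⁻¹ * v⁻¹ * (g⁻¹ * (A * u⁻¹) * g) * v := by group
    rw [e1, hAucomm, hlam]
    calc u * A⁻¹ * v⁻¹ * (A * u⁻¹) * v = u * (A⁻¹ * v⁻¹) * A * u⁻¹ * v := by group
      _ = u * (v⁻¹ * A⁻¹) * A * u⁻¹ * v := by rw [hAvinv]
      _ = u * v⁻¹ * u⁻¹ * v := by group
  have hcomm : Commute T lam := by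
    show T * lam = lam * T
    conv_lhs => rw [← hTlam]
    group
  have hLT : ∀ j s : ℤ, lam ^ j * T ^ s = T ^ s * lam ^ j :=
    fun j s => (hcomm.symm.zpow_zpow j s).eq
  -- membership of the building blocks
  have hP : u * T ^ r ∈ conjProdSet T := by
    rw [hupow, hTr, hs']
    exact gt_chain_mem T B v hBT s'
  have hRS : v⁻¹ * u⁻¹ * v * T ^ r ∈ conjProdSet T := by
    have h := gt_chain_mem T (v⁻¹ * B⁻¹ * v) v⁻¹ hxTd s'
    rw [gt_conj_pow_aux, ← hs', inv_pow, ← hupow, ← hTr] at h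
    exact h
  have hy0 : v * T ^ r * u * v⁻¹ ∈ conjProdSet T := by
    have e : v * T ^ r * u * v⁻¹
        = (v * T ^ r) * (u * T ^ r) * (v * T ^ r)⁻¹ := by group
    rw [e]
    exact gt_mem_conj _ hP
  have hT2e : T ^ (2 * r) * lam
      = (T ^ (2 * r)) * (u * T ^ r) * (T ^ (2 * r))⁻¹
        * ((T ^ r) * (v⁻¹ * u⁻¹ * v * T ^ r) * (T ^ r)⁻¹) := by
    rw [hlam]; group
  have hT2l : T ^ (2 * r) * lam ∈ conjProdSet T := by
    rw [hT2e]
    exact gt_mem_mul (gt_mem_conj _ hP) (gt_mem_conj _ hRS)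
  -- the remaining exponents
  set m' : ℤ := m - (2 * n - 1) * r with hm'd
  have hm'0 : 0 ≤ m' := by
    rw [hm'd, hrdef]
    have : -((2 * n - 1) * q) = (2 * n - 1) * (-q) := by ring
    omega
  set Φ : G := (T ^ (2 * r) * lam) ^ (n - 1) with hΦdef
  have hΦT : Φ = T ^ (2 * r * (n - 1)) * lam ^ (n - 1) := by
    rw [hΦdef, (hcomm.zpow_left (2 * r)).mul_zpow, ← zpow_mul]
  obtain ⟨m'', hm''⟩ : ∃ k : ℕ, (k : ℤ) = m' := ⟨m'.toNat, Int.toNat_of_nonneg hm'0⟩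
  obtain ⟨n'', hn''⟩ : ∃ k : ℕ, (k : ℤ) = n - 1 :=
    ⟨(n - 1).toNat, Int.toNat_of_nonneg (by omega)⟩
  have hTmem : T ∈ conjProdSet T := by simpa using gt_mem_single T 1
  have hA1 : T ^ m' = 1 ∨ T ^ m' ∈ conjProdSet T := by
    rw [show T ^ m' = T ^ m'' from by rw [← hm'', zpow_natCast]]
    exact gt_mem_pow_aux hTmem m''
  have hA2 : Φ = 1 ∨ Φ ∈ conjProdSet T := by
    rw [show Φ = (T ^ (2 * r) * lam) ^ n'' from by rw [hΦdef, ← hn'', zpow_natCast]]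
    exact gt_mem_pow_aux hT2l n''
  -- SP closure helpers
  have SPmul : ∀ x y : G, (x = 1 ∨ x ∈ conjProdSet T) → (y = 1 ∨ y ∈ conjProdSet T) →
      (x * y = 1 ∨ x * y ∈ conjProdSet T) := by
    rintro x y (rfl | hx) (rfl | hy)
    · left; simp
    · right; simpa using hy
    · right; simpa using hx
    · right; exact gt_mem_mul hx hy
  have SPconj : ∀ (gg x : G), (x = 1 ∨ x ∈ conjProdSet T) →
      (gg * x * gg⁻¹ = 1 ∨ gg * x * gg⁻¹ ∈ conjProdSet T) := by
    rintro gg x (rfl | hx)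
    · left; simp
    · right; exact gt_mem_conj _ hx
  have SPmulS : ∀ x y : G, (x = 1 ∨ x ∈ conjProdSet T) → y ∈ conjProdSet T →
      x * y ∈ conjProdSet T := by
    rintro x y (rfl | hx) hy
    · simpa using hy
    · exact gt_mem_mul hx hy
  -- the element and its membership
  have hC : v * (Φ * T ^ m') * v⁻¹ = 1 ∨ v * (Φ * T ^ m') * v⁻¹ ∈ conjProdSet T :=
    SPconj v _ (SPmul _ _ hA2 hA1)
  have h12 : T ^ m' * Φ = 1 ∨ T ^ m' * Φ ∈ conjProdSet T := SPmul _ _ hA1 hA2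
  have h123 : T ^ m' * Φ * (v * (Φ * T ^ m') * v⁻¹) = 1 ∨
      T ^ m' * Φ * (v * (Φ * T ^ m') * v⁻¹) ∈ conjProdSet T := SPmul _ _ h12 hC
  have h4 : T ^ m' * Φ * (v * (Φ * T ^ m') * v⁻¹) * (v * T ^ r * u * v⁻¹)
      ∈ conjProdSet T := SPmulS _ _ h123 hy0
  have hfull : T ^ m' * Φ * (v * (Φ * T ^ m') * v⁻¹) * (v * T ^ r * u * v⁻¹)
      * (v⁻¹ * u⁻¹ * v * T ^ r) ∈ conjProdSet T := gt_mem_mul h4 hRS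
  -- the element equals 1
  have step2 : Φ * (T ^ m' * T ^ r) * lam = T ^ m * lam ^ n := by
    rw [hΦT, ← zpow_add T m' r]
    calc T ^ (2 * r * (n - 1)) * lam ^ (n - 1) * T ^ (m' + r) * lam
        = T ^ (2 * r * (n - 1)) * (lam ^ (n - 1) * T ^ (m' + r)) * lam := by
          rw [mul_assoc (T ^ (2 * r * (n - 1)))]
      _ = T ^ (2 * r * (n - 1)) * (T ^ (m' + r) * lam ^ (n - 1)) * lam := by rw [hLT]
      _ = (T ^ (2 * r * (n - 1)) * T ^ (m' + r)) * (lam ^ (n - 1) * lam) := by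
          simp only [mul_assoc]
      _ = T ^ (2 * r * (n - 1) + (m' + r)) * lam ^ (n - 1 + 1) := by
          rw [← zpow_add, ← zpow_add_one]
      _ = T ^ m * lam ^ n := by
          rw [show (2 : ℤ) * r * (n - 1) + (m' + r) = m from by rw [hm'd]; ring,
            show n - 1 + 1 = n from by ring]
  have step4 : T ^ m' * Φ * (lam * T ^ r) = T ^ m * lam ^ n := by
    rw [hΦT]
    calc T ^ m' * (T ^ (2 * r * (n - 1)) * lam ^ (n - 1)) * (lam * T ^ r)
        = (T ^ m' * T ^ (2 * r * (n - 1))) * ((lam ^ (n - 1) * lam) * T ^ r) := by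
          simp only [mul_assoc]
      _ = T ^ (m' + 2 * r * (n - 1)) * (lam ^ (n - 1 + 1) * T ^ r) := by
          rw [← zpow_add, ← zpow_add_one]
      _ = T ^ (m' + 2 * r * (n - 1)) * (T ^ r * lam ^ (n - 1 + 1)) := by rw [hLT]
      _ = (T ^ (m' + 2 * r * (n - 1)) * T ^ r) * lam ^ (n - 1 + 1) := by
          exact (mul_assoc _ _ _).symm
      _ = T ^ m * lam ^ n := by
          rw [← zpow_add, show m' + 2 * r * (n - 1) + r = m from by rw [hm'd]; ring,
            show n - 1 + 1 = n from by ring]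
  have ea : T ^ m' * Φ * (v * (Φ * T ^ m') * v⁻¹) * (v * T ^ r * u * v⁻¹)
      * (v⁻¹ * u⁻¹ * v * T ^ r)
      = T ^ m' * Φ * (v * (Φ * (T ^ m' * T ^ r) * lam) * v⁻¹) * (lam * T ^ r) := by
    rw [hlam]; group
  have hΩeq : T ^ m' * Φ * (v * (Φ * T ^ m') * v⁻¹) * (v * T ^ r * u * v⁻¹)
      * (v⁻¹ * u⁻¹ * v * T ^ r) = 1 := by
    rw [ea, step2, R3]
    simp only [mul_one, mul_inv_cancel]
    rw [step4, R3]
  exact hΩeq ▸ hfull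

end AuxLemmas

/-- Theorem 1.5(3): for `p ≥ 1`, `q ≤ -1`, `n ≥ 1` and `m ≥ -(2n-1)q`, in
`Γ = π₁(K(m/n))` for `K = C[2p, 2q]` the identity lies in `⟨⟨t⟩⟩⁺`;
consequently, if `t ≠ 1` then the meridian `t` is a generalized torsion
element of `Γ`. -/
theorem genus_one_two_bridge_surgery_negative_q (p q m n : ℤ)
    (hp : 1 ≤ p) (hq : q ≤ -1) (hn : 1 ≤ n) (hm : -((2 * n - 1) * q) ≤ m) :
    letI t : PresentedGroup (surgeryRels p q m n) := PresentedGroup.of 2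
    (1 : PresentedGroup (surgeryRels p q m n)) ∈ conjProdSet t ∧
    (t ≠ 1 → IsGeneralizedTorsion t) := by
  have main : (1 : PresentedGroup (surgeryRels p q m n)) ∈
      conjProdSet (PresentedGroup.of (rels := surgeryRels p q m n) 2) := by
    set φ : FreeGroup (Fin 3) →* PresentedGroup (surgeryRels p q m n) :=
      PresentedGroup.mk (surgeryRels p q m n) with hφ
    have hone : ∀ ρ ∈ surgeryRels p q m n, φ ρ = 1 := fun ρ hρ =>
      (QuotientGroup.eq_one_iff ρ).mpr (Subgroup.subset_normalClosure hρ)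
    have h1 := hone _ (Set.mem_insert _ _)
    have h2 := hone _ (Set.mem_insert_of_mem _ (Set.mem_insert _ _))
    have h3 := hone _ (Set.mem_insert_of_mem _ (Set.mem_insert_of_mem _ (Set.mem_singleton _)))
    simp only [map_mul, map_zpow, map_inv] at h1 h2 h3
    rw [mul_inv_eq_one] at h1 h2
    exact gt_main_lemma (φ (FreeGroup.of 0)) (φ (FreeGroup.of 1)) (φ (FreeGroup.of 2))
      p q m n hq hn hm h1 h2 h3
  refine ⟨main, fun ht => ?_⟩
  obtain ⟨xs, hxs, hprod⟩ := main
  exact ⟨ht, xs, hxs, hprod⟩
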